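/- arXiv:1408.3601 — 5 statements merged into one kernel-verified Lean document; each statement's English description precedes it below -/
import Mathlib

section
/- Let ν denote the 2-adic valuation and α the binary digit sum. For positive integers t and B, if j is an integer with 0 < |2^{t+1}·B - j| < 2^{t+1} and 0 ≤ j ≤ 2^{t+2}·B, then ν(C(2^{t+2}·B, j)) > α(B). -/
/-- `α n` is the number of 1's in the binary expansion of `n`. -/
def binaryDigitSum (n : ℕ) : ℕ := (Nat.digits 2 n).sum

/-!
By Kummer's theorem `ν(C(m, j)) = α(j) + α(m - j) - α(m)`. Put `P = 2^(t+1)`, so `m = 2PB` and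
`α(m) = α(B)`, and `{j, m - j} = {PB - e, PB + e}` with `0 < e < P`. Since `e < P`, the binary
expansions concatenate: `α(PB + e) = α(B) + α(e)` and `α(PB - e) = α(P(B - 1) + (P - e)) =
α(B - 1) + α(P - e)`. As `α(e), α(P - e) ≥ 1` and `α(B) ≤ α(B - 1) + 1`, the sum
`α(j) + α(m - j)` exceeds `2 α(B)`.
-/

namespace Nat

variable {b : ℕ}

theorem digits_sum_base_pow_mul_add (hb : 1 < b) (k a : ℕ) {c : ℕ} (hc : c < b ^ k) :
    (b.digits (b ^ k * a + c)).sum = (b.digits a).sum + (b.digits c).sum := by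
  rcases Nat.eq_zero_or_pos a with rfl | ha
  · simp
  have hlen := (digits_length_le_iff hb c).mpr hc
  have h := digits_append_zeroes_append_digits (k := k - (b.digits c).length) (n := c) hb ha
  rw [Nat.add_sub_cancel' hlen, add_comm] at h
  rw [← h, List.sum_append, List.sum_append, List.sum_replicate, smul_zero, add_zero, add_comm]

theorem digits_sum_of_lt {c : ℕ} (hc : c < b) : (b.digits c).sum = c := by
  rcases Nat.eq_zero_or_pos c with rfl | hc0
  · simp
  · simp [digits_of_lt b c hc0.ne' hc]

theorem digits_sum_base_mul_add (hb : 1 < b) (q : ℕ) {r : ℕ} (hr : r < b) :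
    (b.digits (b * q + r)).sum = (b.digits q).sum + r := by
  have h := digits_sum_base_pow_mul_add hb 1 q (c := r) (by rwa [pow_one])
  rwa [pow_one, digits_sum_of_lt hr] at h

theorem digits_sum_pos {n : ℕ} (hn : n ≠ 0) : 0 < (b.digits n).sum :=
  (Nat.pos_of_ne_zero (getLast_digit_ne_zero b hn)).trans_le
    (List.le_sum_of_mem (List.getLast_mem _))

theorem digits_sum_succ_le (hb : 1 < b) (n : ℕ) :
    (b.digits (n + 1)).sum ≤ (b.digits n).sum + 1 := by
  induction n using Nat.strong_induction_on with
  | _ n ih =>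
  obtain ⟨q, r, hr, rfl⟩ : ∃ q r, r < b ∧ n = b * q + r :=
    ⟨n / b, n % b, Nat.mod_lt n (by omega), (Nat.div_add_mod n b).symm⟩
  rw [digits_sum_base_mul_add hb q hr]
  by_cases hcarry : r + 1 < b
  · rw [add_assoc, digits_sum_base_mul_add hb q hcarry]
    omega
  · have hq : q < b * q + r := by nlinarith
    have hsucc : b * q + r + 1 = b * (q + 1) + 0 := by rw [mul_add_one]; omega
    rw [hsucc, digits_sum_base_mul_add hb (q + 1) (by omega)]
    have := ih q hq
    omega

theorem two_mul_digits_sum_lt_digits_sum_sub_add_digits_sum_add (hb : 1 < b) {k B e : ℕ}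
    (hB : 0 < B) (he : 0 < e) (heb : e < b ^ k) :
    2 * (b.digits B).sum < (b.digits (b ^ k * B - e)).sum + (b.digits (b ^ k * B + e)).sum := by
  have hsub : b ^ k * B - e = b ^ k * (B - 1) + (b ^ k - e) := by
    have : b ^ k * B = b ^ k * (B - 1) + b ^ k := by rw [← mul_add_one, Nat.sub_add_cancel hB]
    omega
  rw [hsub, digits_sum_base_pow_mul_add hb k _ (by omega), digits_sum_base_pow_mul_add hb k _ heb]
  have hpred := digits_sum_succ_le hb (B - 1)
  rw [Nat.sub_add_cancel hB] at hpred
  have := digits_sum_pos (b := b) he.ne'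
  have := digits_sum_pos (b := b) (n := b ^ k - e) (by omega)
  omega

end Nat

open Nat

theorem padicValNat_two_choose {n k : ℕ} (hk : k ≤ n) :
    padicValNat 2 (n.choose k) = binaryDigitSum k + binaryDigitSum (n - k) - binaryDigitSum n := by
  simpa [binaryDigitSum] using sub_one_mul_padicValNat_choose_eq_sub_sum_digits (p := 2) hk

theorem stmt4_general (t B : ℕ) (hB : 0 < B) (j : ℕ)
    (hj : j ≤ 2 ^ (t + 2) * B)
    (h1 : 0 < |(2 ^ (t + 1) * B : ℤ) - j|)
    (h2 : |(2 ^ (t + 1) * B : ℤ) - j| < 2 ^ (t + 1)) :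
    padicValNat 2 (Nat.choose (2 ^ (t + 2) * B) j) > binaryDigitSum B := by
  set P := 2 ^ (t + 1) with hP
  have hm : 2 ^ (t + 2) * B = 2 * (P * B) := by rw [hP]; ring
  obtain ⟨e, he, heP, hje⟩ : ∃ e, 0 < e ∧ e < P ∧ (j + e = P * B ∨ j = P * B + e) := by
    have hcast : (2 ^ (t + 1) * B : ℤ) = ((P * B : ℕ) : ℤ) := by push_cast [hP]; rfl
    rw [hcast, abs_pos, sub_ne_zero] at h1
    rw [hcast, abs_lt, show ((2 : ℤ) ^ (t + 1)) = (P : ℤ) by push_cast [hP]; rfl] at h2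
    refine ⟨(((P * B : ℕ) : ℤ) - j).natAbs, ?_⟩
    omega
  have hsum : 2 * binaryDigitSum B < binaryDigitSum j + binaryDigitSum (2 ^ (t + 2) * B - j) := by
    have key := two_mul_digits_sum_lt_digits_sum_sub_add_digits_sum_add one_lt_two hB he heP
    rcases hje with h | h
    · rwa [show j = P * B - e by omega, show 2 ^ (t + 2) * B - (P * B - e) = P * B + e by omega]
    · rwa [h, show 2 ^ (t + 2) * B - (P * B + e) = P * B - e by omega, add_comm]
  have hαm : binaryDigitSum (2 ^ (t + 2) * B) = binaryDigitSum B := by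
    simpa [binaryDigitSum] using
      digits_sum_base_pow_mul_add one_lt_two (t + 2) B (c := 0) (by positivity)
  rw [padicValNat_two_choose hj, hαm]
  omega

theorem stmt4 (t B : ℕ) (ht : 0 < t) (hB : 0 < B) (j : ℕ)
    (hj : j ≤ 2 ^ (t + 2) * B)
    (h1 : 0 < |(2 ^ (t + 1) * B : ℤ) - j|)
    (h2 : |(2 ^ (t + 1) * B : ℤ) - j| < 2 ^ (t + 1)) :
    padicValNat 2 (Nat.choose (2 ^ (t + 2) * B) j) > binaryDigitSum B :=
  stmt4_general t B hB j hj h1 h2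
end

section
/- Let ν denote the 2-adic valuation and α the binary digit sum. For positive integers t and B with B ≥ 2, and for every integer j with (B-2)·2^t < j < (B+1)·2^t: ν(C((2B-1)·2^t, j)) = α(B) - 1 if j = (B-1)·2^t or j = B·2^t, and ν(C((2B-1)·2^t, j)) > α(B) - 1 for all other such j. -/
open scoped Nat

theorem binaryDigitSum_pow_mul_add (t a : ℕ) {r : ℕ} (hr : r < 2 ^ t) :
    binaryDigitSum (2 ^ t * a + r) = binaryDigitSum a + binaryDigitSum r := by
  rcases Nat.eq_zero_or_pos a with rfl | ha
  · simp [binaryDigitSum]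
  have hlen : (Nat.digits 2 r).length ≤ t := (Nat.digits_length_le_iff one_lt_two r).2 hr
  have h := Nat.digits_append_zeroes_append_digits (k := t - (Nat.digits 2 r).length)
    (n := r) one_lt_two ha
  rw [Nat.add_sub_cancel' hlen, add_comm r] at h
  rw [binaryDigitSum, ← h]
  simp [binaryDigitSum, add_comm]

theorem binaryDigitSum_pow_mul (t a : ℕ) : binaryDigitSum (2 ^ t * a) = binaryDigitSum a := by
  simpa [binaryDigitSum] using binaryDigitSum_pow_mul_add t a (Nat.two_pow_pos t)

theorem binaryDigitSum_two_mul_add_one (a : ℕ) :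
    binaryDigitSum (2 * a + 1) = binaryDigitSum a + 1 := by
  simpa [binaryDigitSum] using binaryDigitSum_pow_mul_add 1 a one_lt_two

theorem padicValNat_two_factorial_add_binaryDigitSum (n : ℕ) :
    padicValNat 2 n ! + binaryDigitSum n = n := by
  have h := sub_one_mul_padicValNat_factorial (p := 2) n
  have := Nat.digit_sum_le 2 n
  simp only [binaryDigitSum]
  omega

theorem padicValNat_two_choose_add_binaryDigitSum {n k : ℕ} (hkn : k ≤ n) :
    padicValNat 2 (n.choose k) + binaryDigitSum n =
      binaryDigitSum k + binaryDigitSum (n - k) := by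
  have hfac : padicValNat 2 n ! =
      padicValNat 2 (n.choose k) + padicValNat 2 k ! + padicValNat 2 (n - k)! := by
    rw [← Nat.choose_mul_factorial_mul_factorial hkn,
      padicValNat.mul (Nat.mul_ne_zero (Nat.choose_pos hkn).ne' k.factorial_ne_zero)
        (n - k).factorial_ne_zero,
      padicValNat.mul (Nat.choose_pos hkn).ne' k.factorial_ne_zero]
  have := padicValNat_two_factorial_add_binaryDigitSum n
  have := padicValNat_two_factorial_add_binaryDigitSum k
  have := padicValNat_two_factorial_add_binaryDigitSum (n - k)
  omega

theorem binaryDigitSum_pos {n : ℕ} (hn : n ≠ 0) : 0 < binaryDigitSum n := by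
  have := padicValNat_factorial_lt_of_ne_zero 2 hn
  have := padicValNat_two_factorial_add_binaryDigitSum n
  omega

theorem binaryDigitSum_succ_le (n : ℕ) : binaryDigitSum (n + 1) ≤ binaryDigitSum n + 1 := by
  have h := padicValNat_two_choose_add_binaryDigitSum (Nat.le_add_left 1 n)
  simp only [Nat.add_sub_cancel] at h
  have : binaryDigitSum 1 = 1 := by simp [binaryDigitSum]
  omega

theorem padicValNat_two_choose_pow_mul (t a b : ℕ) :
    padicValNat 2 ((2 ^ t * (a + b)).choose (2 ^ t * a)) + binaryDigitSum (a + b) =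
      binaryDigitSum a + binaryDigitSum b := by
  have hsub : 2 ^ t * (a + b) - 2 ^ t * a = 2 ^ t * b := by
    rw [mul_add, Nat.add_sub_cancel_left]
  have h := padicValNat_two_choose_add_binaryDigitSum
    (Nat.mul_le_mul_left (2 ^ t) (Nat.le_add_right a b))
  rwa [hsub, binaryDigitSum_pow_mul, binaryDigitSum_pow_mul, binaryDigitSum_pow_mul] at h

theorem padicValNat_two_choose_pow_mul_add (t a b : ℕ) {r : ℕ} (hr0 : 0 < r) (hrt : r < 2 ^ t) :
    padicValNat 2 ((2 ^ t * (a + b + 1)).choose (2 ^ t * a + r)) + binaryDigitSum (a + b + 1) =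
      binaryDigitSum a + binaryDigitSum b + binaryDigitSum r + binaryDigitSum (2 ^ t - r) := by
  have hle : 2 ^ t * a + r ≤ 2 ^ t * (a + b + 1) := by
    rw [mul_add, mul_add, mul_one]; omega
  have hsub : 2 ^ t * (a + b + 1) - (2 ^ t * a + r) = 2 ^ t * b + (2 ^ t - r) := by
    rw [mul_add, mul_add, mul_one]; omega
  have h := padicValNat_two_choose_add_binaryDigitSum hle
  rw [hsub, binaryDigitSum_pow_mul_add _ _ hrt, binaryDigitSum_pow_mul_add _ _ (by omega),
    binaryDigitSum_pow_mul] at h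
  omega

theorem binaryDigitSum_le_padicValNat_two_choose (t c : ℕ) {a r : ℕ} (hca : c ≤ a)
    (hac : a ≤ c + 2) (hr0 : 0 < r) (hrt : r < 2 ^ t) :
    binaryDigitSum (c + 2) ≤
      padicValNat 2 ((2 ^ t * (2 * (c + 1) + 1)).choose (2 ^ t * a + r)) := by
  obtain ⟨b, hab⟩ : ∃ b, a + b = 2 * c + 2 := ⟨2 * c + 2 - a, by omega⟩
  have h := padicValNat_two_choose_pow_mul_add t a b hr0 hrt
  rw [show a + b + 1 = 2 * (c + 1) + 1 by omega, binaryDigitSum_two_mul_add_one] at h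
  have := binaryDigitSum_pos hr0.ne'
  have := binaryDigitSum_pos (Nat.sub_pos_of_lt hrt).ne'
  have hc : binaryDigitSum (c + 1) ≤ binaryDigitSum c + 1 := binaryDigitSum_succ_le c
  have hc' : binaryDigitSum (c + 2) ≤ binaryDigitSum (c + 1) + 1 := binaryDigitSum_succ_le (c + 1)
  rcases (by omega : a = c ∧ b = c + 2 ∨ a = c + 1 ∧ b = c + 1 ∨ a = c + 2 ∧ b = c) with
    ⟨rfl, rfl⟩ | ⟨rfl, rfl⟩ | ⟨rfl, rfl⟩ <;> omega

theorem exists_mul_add_of_lt_of_ne {c q j : ℕ} (h1 : c * q < j) (h2 : j < (c + 3) * q)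
    (hne1 : j ≠ (c + 1) * q) (hne2 : j ≠ (c + 2) * q) :
    ∃ a r, c ≤ a ∧ a ≤ c + 2 ∧ 0 < r ∧ r < q ∧ j = q * a + r := by
  have hq : 0 < q := Nat.pos_of_ne_zero (by rintro rfl; simp at h2)
  have hca : c ≤ j / q := (Nat.le_div_iff_mul_le hq).2 h1.le
  have hac : j / q ≤ c + 2 := Nat.lt_succ_iff.1 ((Nat.div_lt_iff_lt_mul hq).2 h2)
  refine ⟨j / q, j % q, hca, hac, Nat.pos_of_ne_zero fun hr => ?_, Nat.mod_lt _ hq,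
    (Nat.div_add_mod _ _).symm⟩
  have hj : j = j / q * q := (Nat.div_mul_cancel (Nat.dvd_of_mod_eq_zero hr)).symm
  rcases (by omega : j / q = c ∨ j / q = c + 1 ∨ j / q = c + 2) with h | h | h <;>
    rw [h] at hj <;> omega

theorem stmt5_general (t B : ℕ) (hB : 2 ≤ B) (j : ℕ)
    (h1 : (B - 2) * 2 ^ t < j) (h2 : j < (B + 1) * 2 ^ t) :
    (j = (B - 1) * 2 ^ t ∨ j = B * 2 ^ t →
      padicValNat 2 (Nat.choose ((2 * B - 1) * 2 ^ t) j) = binaryDigitSum B - 1) ∧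
    (j ≠ (B - 1) * 2 ^ t ∧ j ≠ B * 2 ^ t →
      padicValNat 2 (Nat.choose ((2 * B - 1) * 2 ^ t) j) > binaryDigitSum B - 1) := by
  obtain ⟨c, rfl⟩ : ∃ c, B = c + 2 := ⟨B - 2, by omega⟩
  have hn : (2 * (c + 2) - 1) * 2 ^ t = 2 ^ t * (2 * (c + 1) + 1) := by
    rw [mul_comm, show 2 * (c + 2) - 1 = 2 * (c + 1) + 1 by omega]
  simp only [Nat.add_sub_cancel, Nat.add_succ_sub_one, hn] at h1 ⊢
  have hs := binaryDigitSum_two_mul_add_one (c + 1)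
  refine ⟨?_, fun ⟨hne1, hne2⟩ => ?_⟩
  · rintro (rfl | rfl)
    · have := padicValNat_two_choose_pow_mul t (c + 1) (c + 2)
      rw [show c + 1 + (c + 2) = 2 * (c + 1) + 1 by ring] at this
      rw [mul_comm (c + 1)]
      omega
    · have := padicValNat_two_choose_pow_mul t (c + 2) (c + 1)
      rw [show c + 2 + (c + 1) = 2 * (c + 1) + 1 by ring] at this
      rw [mul_comm (c + 2)]
      omega
  · obtain ⟨a, r, hca, hac, hr0, hrt, rfl⟩ := exists_mul_add_of_lt_of_ne h1 h2 hne1 hne2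
    have := binaryDigitSum_le_padicValNat_two_choose t c hca hac hr0 hrt
    have := binaryDigitSum_pos (n := c + 2) (by omega)
    omega

theorem stmt5 (t B : ℕ) (ht : 0 < t) (hB : 2 ≤ B) (j : ℕ)
    (h1 : (B - 2) * 2 ^ t < j) (h2 : j < (B + 1) * 2 ^ t) :
    (j = (B - 1) * 2 ^ t ∨ j = B * 2 ^ t →
      padicValNat 2 (Nat.choose ((2 * B - 1) * 2 ^ t) j) = binaryDigitSum B - 1) ∧
    (j ≠ (B - 1) * 2 ^ t ∧ j ≠ B * 2 ^ t →
      padicValNat 2 (Nat.choose ((2 * B - 1) * 2 ^ t) j) > binaryDigitSum B - 1) :=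
  stmt5_general t B hB j h1 h2
end

section
/- For every integer ℓ with 1 < ℓ < 2^{e+1}, the 2-adic valuation of C(2^{e+1}, ℓ) - 2·C(2^e, ℓ) equals 2e + 1 - ⌊log₂(ℓ-1)⌋ - ν(ℓ), where C(2^e, ℓ) is interpreted as 0 when ℓ > 2^e. -/
/-!
Vandermonde gives `C(2N, ℓ) - 2 C(N, ℓ) = ∑_{0<j<ℓ} C(N, j) C(N, ℓ-j)`, and for `N = 2^e` Kummer's
theorem gives `ν(C(N, j) C(N, ℓ-j)) = 2e - ν(j) - ν(ℓ-j)`. With `t = ⌊log₂(ℓ-1)⌋` we have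
`2^t < ℓ ≤ 2^(t+1)`. If `ℓ = 2^(t+1)`, the term `j = 2^t` is the unique term of least valuation.
Otherwise the least valuation is attained exactly at the two terms `j = 2^t` and `j = ℓ - 2^t`
(all other `j` have `ν(j), ν(ℓ-j) < t` and `min(ν(j), ν(ℓ-j)) ≤ ν(ℓ)`), so pairing `j` with `ℓ - j`
writes the sum as twice a sum with a unique minimal term, plus a middle term of even larger
valuation. When `ℓ > 2^e` only `C(2^(e+1), ℓ)` is left and Kummer applies directly.
-/
open Finset

section PadicValNat

variable {p : ℕ} [Fact p.Prime]

theorem padicValNat_add_eq_left_of_pow_dvd {a b : ℕ} (ha : a ≠ 0)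
    (hb : p ^ (padicValNat p a + 1) ∣ b) : padicValNat p (a + b) = padicValNat p a := by
  have hab : a + b ≠ 0 := by omega
  refine le_antisymm ?_ ((padicValNat_dvd_iff_le hab).1 ?_)
  · by_contra! h
    have hdvd := (padicValNat_dvd_iff_le hab).2 h
    exact pow_succ_padicValNat_not_dvd ha ((Nat.dvd_add_left hb).1 hdvd)
  · exact dvd_add pow_padicValNat_dvd ((pow_dvd_pow p (Nat.le_succ _)).trans hb)

theorem padicValNat_sum_eq_of_pow_dvd {ι : Type*} {s : Finset ι} {f : ι → ℕ} {i : ι}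
    (hi : i ∈ s) (hfi : f i ≠ 0)
    (hf : ∀ j ∈ s, j ≠ i → p ^ (padicValNat p (f i) + 1) ∣ f j) :
    padicValNat p (∑ j ∈ s, f j) = padicValNat p (f i) := by
  classical
  rw [← add_sum_erase s f hi]
  exact padicValNat_add_eq_left_of_pow_dvd hfi
    (dvd_sum fun j hj => hf j (mem_of_mem_erase hj) (ne_of_mem_erase hj))

theorem min_le_padicValNat_add {a b : ℕ} (hab : a + b ≠ 0) :
    min (padicValNat p a) (padicValNat p b) ≤ padicValNat p (a + b) :=
  (padicValNat_dvd_iff_le hab).1 <| dvd_add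
    ((pow_dvd_pow p (min_le_left _ _)).trans pow_padicValNat_dvd)
    ((pow_dvd_pow p (min_le_right _ _)).trans pow_padicValNat_dvd)

theorem padicValNat_lt_of_lt_pow {n k : ℕ} (hn : n ≠ 0) (h : n < p ^ k) :
    padicValNat p n < k :=
  (Nat.pow_lt_pow_iff_right (Fact.out : p.Prime).one_lt).1 <|
    (Nat.le_of_dvd (Nat.pos_of_ne_zero hn) pow_padicValNat_dvd).trans_lt h

theorem padicValNat_choose_prime_pow_add {e j : ℕ} (hj : j ≠ 0) (hje : j ≤ p ^ e) :
    padicValNat p ((p ^ e).choose j) + padicValNat p j = e := by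
  have h := (Fact.out : p.Prime).emultiplicity_choose_prime_pow_add_emultiplicity hje hj
  rw [← padicValNat_eq_emultiplicity (Nat.choose_pos hje).ne',
    ← padicValNat_eq_emultiplicity hj] at h
  exact_mod_cast h

end PadicValNat

theorem padicValNat_two_lt_of_lt_two_pow_succ {n t : ℕ} (hn : n ≠ 0) (h : n < 2 ^ (t + 1))
    (hne : n ≠ 2 ^ t) : padicValNat 2 n < t := by
  refine (Nat.lt_succ_iff.1 (padicValNat_lt_of_lt_pow hn h)).lt_of_ne fun hv => hne ?_
  refine Nat.eq_of_dvd_of_lt_two_mul hn (hv ▸ pow_padicValNat_dvd) ?_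
  rwa [← pow_succ']

theorem sum_Ioo_eq_two_nsmul_add_of_symm {M : Type*} [AddCommMonoid M] {ℓ : ℕ} {f : ℕ → M}
    (hf : ∀ j ≤ ℓ, f (ℓ - j) = f j) :
    ∑ j ∈ Ioo 0 ℓ, f j =
      2 • ∑ j ∈ Ioo 0 ℓ with 2 * j < ℓ, f j + ∑ j ∈ Ioo 0 ℓ with 2 * j = ℓ, f j := by
  have hupper : ∑ j ∈ Ioo 0 ℓ with ℓ < 2 * j, f j = ∑ j ∈ Ioo 0 ℓ with 2 * j < ℓ, f j := by
    refine sum_nbij' (ℓ - ·) (ℓ - ·) ?_ ?_ ?_ ?_ fun j hj => (hf j ?_).symm <;>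
      simp only [mem_filter, mem_Ioo] at * <;> omega
  rw [two_nsmul]
  nth_rw 2 [← hupper]
  rw [← sum_union, ← sum_union]
  · congr 1
    ext j
    simp only [mem_union, mem_filter, mem_Ioo]
    omega
  all_goals
    rw [disjoint_left]
    intro j h₁ h₂
    simp only [mem_union, mem_filter, mem_Ioo] at h₁ h₂
    omega

theorem choose_two_mul_eq_sum_Ioo_add {N ℓ : ℕ} (hℓ : 0 < ℓ) :
    (2 * N).choose ℓ = ∑ j ∈ Ioo 0 ℓ, N.choose j * N.choose (ℓ - j) + 2 * N.choose ℓ := by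
  rw [two_mul, Nat.add_choose_eq, Nat.sum_antidiagonal_eq_sum_range_succ_mk, sum_range_succ,
    range_eq_Ico, sum_eq_sum_Ico_succ_bot hℓ, Ico_add_one_left_eq_Ioo]
  simp only [Nat.choose_zero_right, Nat.sub_zero, Nat.sub_self, one_mul, mul_one]
  ring

section SymmetricSum

variable {f : ℕ → ℕ} {c t ℓ : ℕ}
  (hf : ∀ j ∈ Ioo 0 ℓ, f j ≠ 0)
  (hfv : ∀ j ∈ Ioo 0 ℓ, padicValNat 2 (f j) + (padicValNat 2 j + padicValNat 2 (ℓ - j)) = c)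
include hf hfv

theorem padicValNat_sum_Ioo_of_eq_two_pow (hℓ : ℓ = 2 ^ (t + 1)) :
    padicValNat 2 (∑ j ∈ Ioo 0 ℓ, f j) + 2 * t = c := by
  have hpos : 0 < 2 ^ t := by positivity
  have h2t : ℓ = 2 * 2 ^ t := by rw [hℓ, pow_succ']
  have hmid : 2 ^ t ∈ Ioo 0 ℓ := mem_Ioo.2 ⟨hpos, by omega⟩
  have hvmid := hfv _ hmid
  rw [show ℓ - 2 ^ t = 2 ^ t by omega, padicValNat.prime_pow] at hvmid
  rw [padicValNat_sum_eq_of_pow_dvd hmid (hf _ hmid)]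
  · omega
  intro j hj hne
  have hvj := hfv j hj
  have hfj := hf j hj
  rw [mem_Ioo] at hj
  have h₁ := padicValNat_two_lt_of_lt_two_pow_succ (n := j) (by omega) (by omega) hne
  have h₂ := padicValNat_two_lt_of_lt_two_pow_succ (n := ℓ - j) (t := t) (by omega) (by omega)
    (by omega)
  exact (padicValNat_dvd_iff_le hfj).2 (by omega)

theorem padicValNat_sum_Ioo_lower_half (htℓ : 2 ^ t < ℓ) (hℓt : ℓ < 2 ^ (t + 1)) :
    padicValNat 2 (∑ j ∈ Ioo 0 ℓ with 2 * j < ℓ, f j) + t + padicValNat 2 ℓ = c := by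
  have h2t : 2 ^ (t + 1) = 2 * 2 ^ t := pow_succ' 2 t
  obtain ⟨j₀, rfl⟩ : ∃ j₀, ℓ = j₀ + 2 ^ t := ⟨ℓ - 2 ^ t, by omega⟩
  have hj₀ : j₀ ∈ {j ∈ Ioo 0 (j₀ + 2 ^ t) | 2 * j < j₀ + 2 ^ t} := by
    simp only [mem_filter, mem_Ioo]; omega
  have hj₀' : j₀ ∈ Ioo 0 (j₀ + 2 ^ t) := (mem_filter.1 hj₀).1
  have hvj₀ : padicValNat 2 j₀ < t := padicValNat_lt_of_lt_pow (by omega) (by omega)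
  have hvℓ : padicValNat 2 (j₀ + 2 ^ t) = padicValNat 2 j₀ :=
    padicValNat_add_eq_left_of_pow_dvd (by omega) (pow_dvd_pow 2 hvj₀)
  have hfj₀ := hfv j₀ hj₀'
  rw [Nat.add_sub_cancel_left, padicValNat.prime_pow] at hfj₀
  rw [padicValNat_sum_eq_of_pow_dvd hj₀ (hf j₀ hj₀') fun j hj hne => ?_]
  · omega
  have hj' := (mem_filter.1 hj).1
  simp only [mem_filter, mem_Ioo] at hj
  have h₁ : padicValNat 2 j < t := padicValNat_lt_of_lt_pow (by omega) (by omega)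
  have h₂ := padicValNat_two_lt_of_lt_two_pow_succ (n := j₀ + 2 ^ t - j) (t := t) (by omega)
    (by omega) (by omega)
  have h₃ := min_le_padicValNat_add (p := 2) (a := j) (b := j₀ + 2 ^ t - j) (by omega)
  rw [Nat.add_sub_cancel' (by omega), hvℓ] at h₃
  have := hfv j hj'
  exact (padicValNat_dvd_iff_le (hf j hj')).2 (by omega)

theorem padicValNat_sum_Ioo_of_lt_two_pow (hsymm : ∀ j ≤ ℓ, f (ℓ - j) = f j)
    (htℓ : 2 ^ t < ℓ) (hℓt : ℓ < 2 ^ (t + 1)) :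
    padicValNat 2 (∑ j ∈ Ioo 0 ℓ, f j) + t + padicValNat 2 ℓ = c + 1 := by
  have h2t : 2 ^ (t + 1) = 2 * 2 ^ t := pow_succ' 2 t
  have hlower := padicValNat_sum_Ioo_lower_half hf hfv htℓ hℓt
  have hlower_ne : ∑ j ∈ Ioo 0 ℓ with 2 * j < ℓ, f j ≠ 0 := by
    have hj₀ : ℓ - 2 ^ t ∈ {j ∈ Ioo 0 ℓ | 2 * j < ℓ} := by
      simp only [mem_filter, mem_Ioo]; omega
    exact (sum_pos' (fun _ _ => Nat.zero_le _)
      ⟨_, hj₀, Nat.pos_of_ne_zero (hf _ (mem_filter.1 hj₀).1)⟩).ne'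
  rw [sum_Ioo_eq_two_nsmul_add_of_symm hsymm, smul_eq_mul,
    padicValNat_add_eq_left_of_pow_dvd (mul_ne_zero two_ne_zero hlower_ne)
      (dvd_sum fun j hj => ?_),
    padicValNat.mul two_ne_zero hlower_ne, padicValNat.self one_lt_two]
  · omega
  have hj' := (mem_filter.1 hj).1
  simp only [mem_filter, mem_Ioo] at hj
  have h₁ : padicValNat 2 j < t := padicValNat_lt_of_lt_pow (by omega) (by omega)
  have h₂ : padicValNat 2 ℓ = 1 + padicValNat 2 j := by
    rw [← hj.2, padicValNat.mul two_ne_zero (by omega), padicValNat.self one_lt_two]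
  have := hfv j hj'
  rw [show ℓ - j = j by omega] at this
  rw [padicValNat.mul two_ne_zero hlower_ne, padicValNat.self one_lt_two]
  exact (padicValNat_dvd_iff_le (hf j hj')).2 (by omega)

end SymmetricSum

section ChooseMulChoose

variable {p : ℕ} {e ℓ j : ℕ}

theorem choose_mul_choose_ne_zero (hjℓ : j < ℓ) (hℓ : ℓ ≤ p ^ e) :
    (p ^ e).choose j * (p ^ e).choose (ℓ - j) ≠ 0 :=
  mul_ne_zero (Nat.choose_pos (by omega)).ne' (Nat.choose_pos (by omega)).ne'

theorem padicValNat_choose_mul_choose_add [Fact p.Prime] (hj : j ∈ Ioo 0 ℓ) (hℓ : ℓ ≤ p ^ e) :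
    padicValNat p ((p ^ e).choose j * (p ^ e).choose (ℓ - j)) +
      (padicValNat p j + padicValNat p (ℓ - j)) = 2 * e := by
  rw [mem_Ioo] at hj
  rw [padicValNat.mul (Nat.choose_pos (by omega)).ne' (Nat.choose_pos (by omega)).ne']
  have h₁ := padicValNat_choose_prime_pow_add (p := p) (e := e) (j := j) (by omega) (by omega)
  have h₂ := padicValNat_choose_prime_pow_add (p := p) (e := e) (j := ℓ - j) (by omega) (by omega)
  omega

end ChooseMulChoose

theorem padicValNat_sum_choose_mul_choose {e t ℓ : ℕ} (htℓ : 2 ^ t < ℓ) (hℓt : ℓ ≤ 2 ^ (t + 1))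
    (hℓe : ℓ ≤ 2 ^ e) :
    padicValNat 2 (∑ j ∈ Ioo 0 ℓ, (2 ^ e).choose j * (2 ^ e).choose (ℓ - j)) + t +
      padicValNat 2 ℓ = 2 * e + 1 := by
  have hf : ∀ j ∈ Ioo 0 ℓ, (2 ^ e).choose j * (2 ^ e).choose (ℓ - j) ≠ 0 :=
    fun j hj => choose_mul_choose_ne_zero (mem_Ioo.1 hj).2 hℓe
  have hfv := fun j hj => padicValNat_choose_mul_choose_add (p := 2) (j := j) hj hℓe
  rcases hℓt.lt_or_eq with hℓt | hℓt
  · refine padicValNat_sum_Ioo_of_lt_two_pow hf hfv (fun j hj => ?_) htℓ hℓt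
    rw [Nat.sub_sub_self hj, mul_comm]
  · subst hℓt
    have := padicValNat_sum_Ioo_of_eq_two_pow hf hfv rfl
    rw [padicValNat.prime_pow]
    omega

theorem stmt6_general (e : ℕ) (ℓ : ℕ) (h1 : 1 < ℓ) (h2 : ℓ < 2 ^ (e + 1)) :
    (padicValInt 2 ((Nat.choose (2 ^ (e + 1)) ℓ : ℤ) - 2 * Nat.choose (2 ^ e) ℓ) : ℤ) =
      2 * e + 1 - Nat.log 2 (ℓ - 1) - padicValNat 2 ℓ := by
  have htℓ : 2 ^ Nat.log 2 (ℓ - 1) < ℓ := by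
    have := Nat.pow_log_le_self 2 (show ℓ - 1 ≠ 0 by omega)
    omega
  have hℓt : ℓ ≤ 2 ^ (Nat.log 2 (ℓ - 1) + 1) := by
    have := Nat.lt_pow_succ_log_self one_lt_two (ℓ - 1)
    omega
  generalize Nat.log 2 (ℓ - 1) = t at htℓ hℓt ⊢
  rcases le_or_gt ℓ (2 ^ e) with hℓe | heℓ
  · rw [pow_succ', choose_two_mul_eq_sum_Ioo_add (by omega), Nat.cast_add, Nat.cast_mul,
      Nat.cast_ofNat, add_sub_cancel_right, padicValInt.of_nat]
    have := padicValNat_sum_choose_mul_choose htℓ hℓt hℓe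
    omega
  · have h₁ : e < t + 1 := (Nat.pow_lt_pow_iff_right one_lt_two).1 (heℓ.trans_le hℓt)
    have h₂ : t < e + 1 := (Nat.pow_lt_pow_iff_right one_lt_two).1 (htℓ.trans h2)
    have := padicValNat_choose_prime_pow_add (p := 2) (e := e + 1) (j := ℓ) (by omega) h2.le
    rw [Nat.choose_eq_zero_of_lt heℓ, Nat.cast_zero, mul_zero, sub_zero, padicValInt.of_nat]
    omega

theorem stmt6 (e : ℕ) (he : 0 < e) (ℓ : ℕ) (h1 : 1 < ℓ) (h2 : ℓ < 2 ^ (e + 1)) :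
    (padicValInt 2 ((Nat.choose (2 ^ (e + 1)) ℓ : ℤ) - 2 * Nat.choose (2 ^ e) ℓ) : ℤ) =
      2 * e + 1 - Nat.log 2 (ℓ - 1) - padicValNat 2 ℓ :=
  stmt6_general e ℓ h1 h2
end

section
/- For integers e, t with 2 ≤ t ≤ e, the congruence -C(2^e, 2^t) ≡ 2^{e-t} (mod 2^{2(e-t)+1}) holds; in particular ν(C(2^e, 2^t)) = e - t. -/
/-! Since `2^t C(2^e, 2^t) = 2^e C(2^e - 1, 2^t - 1)`, it suffices to show
`C(2^e - 1, 2^t - 1) ≡ -1 (mod 2^(e-t+1))`. For `0 < i < 2^t` write `i = 2^a m` with `m` odd and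
`a < t`; then `C(2^e - 1, i) m = C(2^e - 1, i - 1) (2^(e-a) - m)` and `2^(e-t+1) ∣ 2^(e-a)`, so
modulo `2^(e-t+1)` consecutive coefficients differ by the factor `-1`. -/

namespace Nat

theorem cast_choose_two_pow_sub_one_eq_neg_one_pow {e t j : ℕ} (ht : t ≤ e) (hj : j < 2 ^ t) :
    ((2 ^ e - 1).choose j : ZMod (2 ^ (e - t + 1))) = (-1) ^ j := by
  induction j with
  | zero => simp
  | succ j ih =>
    obtain ⟨a, m, hm, hjm⟩ := exists_eq_two_pow_mul_odd j.add_one_ne_zero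
    have hat : a < t := by
      have : 2 ^ a < 2 ^ t := lt_of_le_of_lt (hjm ▸ Nat.le_mul_of_pos_right _ hm.pos) hj
      exact (Nat.pow_lt_pow_iff_right (by norm_num)).mp this
    have hrec : ((2 ^ e - 1).choose (j + 1) : ℤ) * m =
        (2 ^ e - 1).choose j * (2 ^ (e - a) - m) := by
      have hpascal := congrArg (Nat.cast : ℕ → ℤ) (choose_succ_right_eq (2 ^ e - 1) j)
      have hje : j + 1 ≤ 2 ^ e := hj.le.trans (Nat.pow_le_pow_right two_pos ht)
      rw [show 2 ^ e - 1 - j = 2 ^ e - (j + 1) by omega] at hpascal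
      push_cast [Nat.cast_sub hje] at hpascal
      have hjmZ : (j : ℤ) + 1 = 2 ^ a * m := by exact_mod_cast hjm
      rw [hjmZ, show (2 : ℤ) ^ e = 2 ^ a * 2 ^ (e - a) by rw [← pow_add]; congr 1; omega]
        at hpascal
      apply mul_left_cancel₀ (pow_ne_zero a two_ne_zero)
      linear_combination hpascal
    have hm_unit : IsUnit (m : ZMod (2 ^ (e - t + 1))) :=
      (ZMod.isUnit_iff_coprime _ _).mpr ((Odd.coprime_two_right hm).pow_right _)
    have htwo_pow : (2 : ZMod (2 ^ (e - t + 1))) ^ (e - a) = 0 := by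
      exact_mod_cast (ZMod.natCast_eq_zero_iff _ _).mpr (pow_dvd_pow 2 (by omega))
    apply hm_unit.mul_right_cancel
    have hrec' := congrArg (Int.cast : ℤ → ZMod (2 ^ (e - t + 1))) hrec
    push_cast at hrec'
    rw [hrec', htwo_pow, ih (by omega)]
    ring

theorem choose_two_pow_two_pow {e t : ℕ} (h : t ≤ e) :
    (2 ^ e).choose (2 ^ t) = 2 ^ (e - t) * (2 ^ e - 1).choose (2 ^ t - 1) := by
  have hid := add_one_mul_choose_eq (2 ^ e - 1) (2 ^ t - 1)
  rw [Nat.sub_add_cancel Nat.one_le_two_pow, Nat.sub_add_cancel Nat.one_le_two_pow] at hid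
  apply Nat.eq_of_mul_eq_mul_right (Nat.two_pow_pos t)
  rw [← hid, ← Nat.sub_add_cancel h, pow_add, Nat.add_sub_cancel]
  ring

theorem neg_choose_two_pow_sub_one_two_pow_sub_one_modEq {e t : ℕ} (ht : t ≠ 0) (h : t ≤ e) :
    -((2 ^ e - 1).choose (2 ^ t - 1) : ℤ) ≡ 1 [ZMOD 2 ^ (e - t + 1)] := by
  have hodd : Odd (2 ^ t - 1) :=
    Nat.Even.sub_odd Nat.one_le_two_pow ((even_pow' ht).mpr even_two) odd_one
  have hchoose :=
    cast_choose_two_pow_sub_one_eq_neg_one_pow h (sub_lt (Nat.two_pow_pos t) one_pos)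
  rw [hodd.neg_one_pow] at hchoose
  exact_mod_cast (ZMod.intCast_eq_intCast_iff _ 1 _).mp (by push_cast [hchoose]; ring)

end Nat

theorem stmt7 (e t : ℕ) (h1 : 2 ≤ t) (h2 : t ≤ e) :
    (-(Nat.choose (2 ^ e) (2 ^ t) : ℤ)) ≡ 2 ^ (e - t) [ZMOD (2 ^ (2 * (e - t) + 1))] ∧
    padicValNat 2 (Nat.choose (2 ^ e) (2 ^ t)) = e - t := by
  have hA := Nat.neg_choose_two_pow_sub_one_two_pow_sub_one_modEq (by omega) h2
  have hA_odd : ¬ 2 ∣ (2 ^ e - 1).choose (2 ^ t - 1) := by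
    have := (hA.of_dvd (dvd_pow_self 2 (Nat.succ_ne_zero _))).dvd
    omega
  rw [Nat.choose_two_pow_two_pow h2]
  constructor
  · convert hA.mul_left' (c := 2 ^ (e - t)) using 1 <;> push_cast <;> ring
  · rw [padicValNat.mul (by positivity) (by omega), padicValNat.prime_pow,
      padicValNat.eq_zero_of_not_dvd hA_odd, add_zero]
end

section
/- If m is a positive integer with ν(m) = k, then the 2-adic valuation of the product m(m-1)(m-2)⋯(m-2^k+1) of 2^k consecutive integers ending at m equals 2^k - 1. -/
/-!
If `ν_p(m) = k`, then for `0 < i < p^k` we have `ν_p(i) < k ≤ ν_p(m)`,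
so `ν_p(m - i) = ν_p(i)`. Hence the product `m (m-1) ⋯ (m - p^k + 1)` has the same
`p`-adic valuation as `p^k (p^k - 1) ⋯ 1 = (p^k)!`, which by Legendre's formula is `(p^k - 1)/(p - 1)`.
-/

section

open Nat

variable {p : ℕ} [hp : Fact p.Prime]

lemma padicValNat_lt_of_lt_pow_s10 {b k : ℕ} (hb : b ≠ 0) (hbk : b < p ^ k) :
    padicValNat p b < k :=
  (Nat.pow_lt_pow_iff_right hp.out.one_lt).1 <|
    (Nat.le_of_dvd (Nat.pos_of_ne_zero hb) pow_padicValNat_dvd).trans_lt hbk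

lemma padicValNat_sub_of_lt {a b : ℕ} (hb : b ≠ 0) (hba : b ≤ a)
    (h : padicValNat p b < padicValNat p a) : padicValNat p (a - b) = padicValNat p b := by
  have hab : a - b ≠ 0 :=
    Nat.sub_ne_zero_of_lt (hba.lt_of_ne (by rintro rfl; exact lt_irrefl _ h))
  have hdvd_a {n : ℕ} (hn : n ≤ padicValNat p a) : p ^ n ∣ a :=
    (pow_dvd_pow p hn).trans pow_padicValNat_dvd
  apply le_antisymm
  · by_contra! hlt
    have hsucc : p ^ (padicValNat p b + 1) ∣ a - b := (padicValNat_dvd_iff_le hab).2 hlt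
    have : p ^ (padicValNat p b + 1) ∣ b := by
      simpa [Nat.sub_sub_self hba] using Nat.dvd_sub (hdvd_a h) hsucc
    exact pow_succ_padicValNat_not_dvd hb this
  · exact (padicValNat_dvd_iff_le hab).1 (Nat.dvd_sub (hdvd_a h.le) pow_padicValNat_dvd)

lemma padicValNat_descFactorial_succ_of_lt_pow {m k j : ℕ} (hm : m ≠ 0)
    (hkm : k ≤ padicValNat p m) (hj : j < p ^ k) :
    padicValNat p (m.descFactorial (j + 1)) = padicValNat p m + padicValNat p j ! := by
  have hpkm : p ^ k ≤ m :=
    Nat.le_of_dvd (Nat.pos_of_ne_zero hm) ((pow_dvd_pow p hkm).trans pow_padicValNat_dvd)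
  induction j with
  | zero => simp
  | succ j ih =>
    have hval : padicValNat p (m - (j + 1)) = padicValNat p (j + 1) :=
      padicValNat_sub_of_lt j.succ_ne_zero (by omega)
        ((padicValNat_lt_of_lt_pow_s10 j.succ_ne_zero hj).trans_le hkm)
    have hdesc : m.descFactorial (j + 1) ≠ 0 := by
      rw [Ne, Nat.descFactorial_eq_zero_iff_lt]
      omega
    rw [Nat.descFactorial_succ, padicValNat.mul (by omega) hdesc, hval, ih (by omega),
      Nat.factorial_succ, padicValNat.mul j.succ_ne_zero (Nat.factorial_ne_zero j)]
    ring

theorem padicValNat_descFactorial_prime_pow {m k : ℕ} (hm : m ≠ 0) (hk : padicValNat p m = k) :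
    padicValNat p (m.descFactorial (p ^ k)) = padicValNat p (p ^ k)! := by
  have hpk : p ^ k ≠ 0 := pow_ne_zero k hp.out.ne_zero
  obtain ⟨j, hj⟩ : ∃ j, p ^ k = j + 1 := Nat.exists_eq_add_one.2 (Nat.pos_of_ne_zero hpk)
  have hjk : j < p ^ k := by omega
  have hm_desc := padicValNat_descFactorial_succ_of_lt_pow hm hk.ge hjk
  have hpk_desc := padicValNat_descFactorial_succ_of_lt_pow hpk (padicValNat.prime_pow k).ge hjk
  rw [← hj] at hm_desc hpk_desc
  rw [hm_desc, ← Nat.descFactorial_self (p ^ k), hpk_desc, padicValNat.prime_pow, hk]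

theorem sub_one_mul_padicValNat_factorial_prime_pow (k : ℕ) :
    (p - 1) * padicValNat p (p ^ k)! = p ^ k - 1 := by
  rw [sub_one_mul_padicValNat_factorial, ← mul_one (p ^ k),
    digits_base_pow_mul hp.out.one_lt one_pos, digits_of_lt p 1 one_ne_zero hp.out.one_lt]
  simp

end

theorem stmt10_general (m k : ℕ) (hm : 0 < m) (hk : padicValNat 2 m = k) :
    padicValNat 2 (∏ i ∈ Finset.range (2 ^ k), (m - i)) = 2 ^ k - 1 := by
  rw [← Nat.descFactorial_eq_prod_range, padicValNat_descFactorial_prime_pow hm.ne' hk]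
  simpa using sub_one_mul_padicValNat_factorial_prime_pow (p := 2) k

theorem stmt10 (m k : ℕ) (hm : 0 < m) (hk : padicValNat 2 m = k) (hmk : 2 ^ k ≤ m) :
    padicValNat 2 (∏ i ∈ Finset.range (2 ^ k), (m - i)) = 2 ^ k - 1 :=
  stmt10_general m k hm hk
end
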